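/- Sufficient condition for bi-Lipschitz non-uniform B-spline transformations: Let k ≥ 3, r + k ≤ s, t strictly increasing knots, and f(x) = Σ_{j=r-k+1}^{s-1} α_j B_{j,k,t}(x). If for all j = r-k+2, ..., s-1 it holds that l/(k-1) < (α_j - α_{j-1})/(t_{j+k-1} - t_j) < u/(k-1), where 0 < l < 1 < u, then l < f'(x) < u for all x in [t_r, t_s] (wherever f' exists). -/

import Mathlib

/-- Cox–de Boor recursion: `Bspl t k j` is the `j`-th non-uniform B-spline of
order `k` for the knot sequence `t` (order 1 is the indicator of `[t j, t (j+1))`). -/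
noncomputable def Bspl (t : ℤ → ℝ) : ℕ → ℤ → ℝ → ℝ
  | 0, _, _ => 0
  | 1, j, x => if t j ≤ x ∧ x < t (j + 1) then 1 else 0
  | (k + 2), j, x =>
      (x - t j) / (t (j + (k : ℤ) + 1) - t j) * Bspl t (k + 1) j x
      + (t (j + (k : ℤ) + 2) - x) / (t (j + (k : ℤ) + 2) - t (j + 1)) * Bspl t (k + 1) (j + 1) x

/-!
On every knot interval `(t m, t (m+1))` with `r ≤ m < s`, the derivative of
`f = ∑ α_j B_{j,k}` is `∑ c_j B_{j,k-1}` with `c_j = (k-1) (α_j - α_{j-1}) / (t_{j+k-1} - t_j)`,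
a convex combination of the `c_j` by the partition of unity, so it lies in `[min c, max c]`.
As `f` is continuous for `k ≥ 2`, the functions `x ↦ f x - x min c` and `x ↦ x max c - f x`
are monotone on each closed knot interval, hence on `[t r, t s]`. A derivative of a monotone
function is nonnegative, so wherever `f'` exists on `[t r, t s]` it lies in
`[min c, max c] ⊆ (l, u)`.
-/

open Finset

theorem sum_Icc_by_parts (α g : ℤ → ℝ) {a b : ℤ} (hab : a ≤ b) :
    ∑ j ∈ Icc a b, α j * (g j - g (j + 1)) =
      α a * g a - α b * g (b + 1) + ∑ j ∈ Icc (a + 1) b, (α j - α (j - 1)) * g j := by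
  induction b, hab using Int.leInduction with
  | base => simp [mul_sub]
  | succ b hab ih =>
    rw [← insert_Icc_right_eq_Icc_add_one (by omega), sum_insert (by simp), ih,
      ← insert_Icc_right_eq_Icc_add_one (by omega), sum_insert (by simp), add_sub_cancel_right]
    ring

/-- The Curry–Schoenberg M-spline, normalized to have integral one. -/
noncomputable def Mspl (t : ℤ → ℝ) (k : ℕ) (j : ℤ) (x : ℝ) : ℝ :=
  k * Bspl t k j x / (t (j + k) - t j)

section Bspline

variable {t : ℤ → ℝ}

theorem Bspl_succ_succ (k : ℕ) (j : ℤ) (x : ℝ) :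
    Bspl t (k + 2) j x = (x - t j) / (t (j + k + 1) - t j) * Bspl t (k + 1) j x +
      (t (j + k + 2) - x) / (t (j + k + 2) - t (j + 1)) * Bspl t (k + 1) (j + 1) x :=
  rfl

theorem Bspl_eq_zero_of_notMem (ht : StrictMono t) (k : ℕ) {j : ℤ} {x : ℝ}
    (hx : x ∉ Set.Ico (t j) (t (j + k))) : Bspl t k j x = 0 := by
  induction k using Nat.twoStepInduction generalizing j with
  | zero => rfl
  | one => simp_all [Bspl]
  | more k _ ih =>
    rw [Set.mem_Ico, not_and_or, not_le, not_lt] at hx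
    push_cast at hx
    have := ht (show j < j + 1 by omega)
    have := ht.monotone (show j + (k + 1) ≤ j + (k + 2) by omega)
    have := ht.monotone (show j + 1 + (k + 1) ≤ j + (k + 2) by omega)
    rw [Bspl_succ_succ, ih, ih, mul_zero, mul_zero, add_zero]
    all_goals
      rintro ⟨h₁, h₂⟩
      push_cast at h₂
      rcases hx with hx | hx <;> linarith

theorem Bspl_nonneg (ht : StrictMono t) (k : ℕ) (j : ℤ) (x : ℝ) : 0 ≤ Bspl t k j x := by
  induction k using Nat.twoStepInduction generalizing j with
  | zero => exact le_rfl
  | one => simp only [Bspl]; split_ifs <;> norm_num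
  | more k _ ih =>
    rw [Bspl_succ_succ]
    apply add_nonneg
    · by_cases hx : x ∈ Set.Ico (t j) (t (j + (k + 1 : ℕ)))
      · push_cast at hx
        have := ht (show j < j + k + 1 by omega)
        exact mul_nonneg (div_nonneg (by linarith [hx.1]) (by linarith)) (ih j)
      · rw [Bspl_eq_zero_of_notMem ht _ hx, mul_zero]
    · by_cases hx : x ∈ Set.Ico (t (j + 1)) (t (j + 1 + (k + 1 : ℕ)))
      · push_cast at hx
        rw [show j + 1 + (k + 1) = j + k + 2 by ring] at hx
        have := ht (show j + 1 < j + k + 2 by omega)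
        exact mul_nonneg (div_nonneg (by linarith [hx.2]) (by linarith)) (ih (j + 1))
      · rw [Bspl_eq_zero_of_notMem ht _ hx, mul_zero]

theorem sum_Bspl_eq_one (ht : StrictMono t) {m : ℤ} {x : ℝ} (hx : x ∈ Set.Ico (t m) (t (m + 1)))
    (k : ℕ) {a b : ℤ} (ha : a + k ≤ m) (hb : m ≤ b) : ∑ j ∈ Icc a b, Bspl t (k + 1) j x = 1 := by
  induction k with
  | zero =>
    rw [sum_eq_single_of_mem m (mem_Icc.2 ⟨by omega, hb⟩)]
    · simp [Bspl, hx.1, hx.2]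
    · intro j _ hjm
      apply Bspl_eq_zero_of_notMem ht
      rintro ⟨h₁, h₂⟩
      push_cast at h₂
      rcases lt_or_gt_of_ne hjm with h | h
      · linarith [hx.1, ht.monotone (show j + 1 ≤ m by omega)]
      · linarith [hx.2, ht.monotone (show m + 1 ≤ j by omega)]
  | succ k ih =>
    rw [← ih (by omega)]
    set w : ℤ → ℝ := fun j => (t (j + k + 1) - x) / (t (j + k + 1) - t j) * Bspl t (k + 1) j x
    have step : ∀ j, Bspl t (k + 1 + 1) j x = Bspl t (k + 1) j x - (w j - w (j + 1)) := by
      intro j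
      have := ht (show j < j + k + 1 by omega)
      simp only [w, Bspl_succ_succ, show j + 1 + k + 1 = j + k + 2 by ring]
      field_simp
      ring
    have ha' : w a = 0 := by
      simp only [w]
      rw [Bspl_eq_zero_of_notMem ht _ (fun h => ?_), mul_zero]
      push_cast at h
      linarith [h.2, hx.1, ht.monotone (show a + (k + 1) ≤ m by omega)]
    have hb' : w (b + 1) = 0 := by
      simp only [w]
      rw [Bspl_eq_zero_of_notMem ht _ (fun h => ?_), mul_zero]
      linarith [h.1, hx.2, ht.monotone (show m + 1 ≤ b + 1 by omega)]
    have := sum_Icc_by_parts (fun _ => 1) w (show a ≤ b by omega)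
    simp only [sub_self, zero_mul, sum_const_zero, one_mul, ha', hb', add_zero] at this
    simp only [step, sum_sub_distrib, this, sub_zero]

theorem Bspl_two_eq (ht : StrictMono t) (j : ℤ) (x : ℝ) :
    Bspl t 2 j x =
      max 0 (min ((x - t j) / (t (j + 1) - t j)) ((t (j + 2) - x) / (t (j + 2) - t (j + 1)))) := by
  have h₁ : 0 < t (j + 1) - t j := sub_pos.2 (ht (by omega))
  have h₂ : 0 < t (j + 2) - t (j + 1) := sub_pos.2 (ht (by omega))
  simp only [Bspl, Nat.cast_zero, add_zero, show j + 1 + 1 = j + 2 by ring]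
  set u := (x - t j) / (t (j + 1) - t j)
  set v := (t (j + 2) - x) / (t (j + 2) - t (j + 1))
  rcases lt_or_ge x (t j) with hx | hx
  · have : u < 0 := div_neg_of_neg_of_pos (by linarith) h₁
    rw [if_neg (fun h => by linarith [h.1]), if_neg (fun h => by linarith [h.1])]
    simp only [min_def, max_def]; split_ifs <;> linarith
  rcases lt_or_ge x (t (j + 1)) with hx' | hx'
  · have : 0 ≤ u := div_nonneg (by linarith) h₁.le
    have : u ≤ 1 := (div_le_one h₁).2 (by linarith)
    have : 1 ≤ v := (one_le_div h₂).2 (by linarith)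
    rw [if_pos ⟨hx, hx'⟩, if_neg (fun h => by linarith [h.1])]
    simp only [min_def, max_def]; split_ifs <;> linarith
  rcases lt_or_ge x (t (j + 2)) with hx'' | hx''
  · have : 1 ≤ u := (one_le_div h₁).2 (by linarith)
    have : 0 ≤ v := div_nonneg (by linarith) h₂.le
    have : v ≤ 1 := (div_le_one h₂).2 (by linarith)
    rw [if_neg (fun h => by linarith [h.2]), if_pos ⟨hx', hx''⟩]
    simp only [min_def, max_def]; split_ifs <;> linarith
  · have : v ≤ 0 := div_nonpos_of_nonpos_of_nonneg (by linarith) h₂.le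
    rw [if_neg (fun h => by linarith [h.2]), if_neg (fun h => by linarith [h.2])]
    simp only [min_def, max_def]; split_ifs <;> linarith

theorem continuous_Bspl (ht : StrictMono t) (k : ℕ) (j : ℤ) : Continuous (Bspl t (k + 2) j) := by
  induction k generalizing j with
  | zero =>
    rw [funext (Bspl_two_eq ht j)]
    fun_prop
  | succ k ih =>
    simp only [funext (Bspl_succ_succ (k + 1) j)]
    have := ih j
    have := ih (j + 1)
    fun_prop

theorem Bspl_one_of_mem_Ico (ht : StrictMono t) {m j : ℤ} {x : ℝ}
    (hx : x ∈ Set.Ico (t m) (t (m + 1))) : Bspl t 1 j x = if j = m then 1 else 0 := by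
  split_ifs with hjm
  · simp [Bspl, hjm, hx.1, hx.2]
  · apply Bspl_eq_zero_of_notMem ht
    rintro ⟨h₁, h₂⟩
    push_cast at h₂
    rcases lt_or_gt_of_ne hjm with h | h
    · linarith [hx.1, ht.monotone (show j + 1 ≤ m by omega)]
    · linarith [hx.2, ht.monotone (show m + 1 ≤ j by omega)]

theorem Mspl_succ (k : ℕ) (j : ℤ) (x : ℝ) :
    Mspl t (k + 1) j x = (k + 1) * Bspl t (k + 1) j x / (t (j + k + 1) - t j) := by
  simp only [Mspl]
  push_cast
  ring_nf

theorem Bspl_div_sub_div_eq (ht : StrictMono t) (k : ℕ) (j : ℤ) (x : ℝ) :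
    k * (Bspl t (k + 1) j x / (t (j + k + 1) - t j) -
        Bspl t (k + 1) (j + 1) x / (t (j + k + 2) - t (j + 1))) =
      (x - t j) / (t (j + k + 1) - t j) * (Mspl t k j x - Mspl t k (j + 1) x) +
        (t (j + k + 2) - x) / (t (j + k + 2) - t (j + 1)) *
          (Mspl t k (j + 1) x - Mspl t k (j + 2) x) := by
  rcases k with _ | k
  · simp [Mspl]
  have d₁ := (sub_pos.2 (ht (show j < j + k + 1 by omega))).ne'
  have d₂ := (sub_pos.2 (ht (show j < j + k + 2 by omega))).ne'
  have d₃ := (sub_pos.2 (ht (show j + 1 < j + k + 2 by omega))).ne'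
  have d₄ := (sub_pos.2 (ht (show j + 1 < j + k + 3 by omega))).ne'
  have d₅ := (sub_pos.2 (ht (show j + 2 < j + k + 3 by omega))).ne'
  simp only [Mspl_succ, Bspl_succ_succ]
  push_cast
  simp only [show j + (k + 1) + 1 = j + k + 2 by ring, show j + (k + 1) + 2 = j + k + 3 by ring,
    show j + 1 + k + 1 = j + k + 2 by ring, show j + 1 + k + 2 = j + k + 3 by ring,
    show j + 2 + k + 1 = j + k + 3 by ring, show j + 1 + 1 = j + 2 by ring]
  field_simp
  ring

theorem hasDerivAt_Bspl (ht : StrictMono t) {m : ℤ} {x : ℝ} (hx : x ∈ Set.Ioo (t m) (t (m + 1)))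
    (k : ℕ) (j : ℤ) : HasDerivAt (Bspl t (k + 1) j) (Mspl t k j x - Mspl t k (j + 1) x) x := by
  induction k generalizing j with
  | zero =>
    have : Bspl t 1 j =ᶠ[nhds x] fun _ => Bspl t 1 j x := by
      filter_upwards [Ioo_mem_nhds hx.1 hx.2] with y hy
      rw [Bspl_one_of_mem_Ico ht (Set.Ioo_subset_Ico_self hy),
        Bspl_one_of_mem_Ico ht (Set.Ioo_subset_Ico_self hx)]
    simpa [Mspl] using (hasDerivAt_const x _).congr_of_eventuallyEq this
  | succ k ih =>
    have hω : HasDerivAt (fun y => (y - t j) / (t (j + k + 1) - t j))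
        (1 / (t (j + k + 1) - t j)) x := by
      simpa using ((hasDerivAt_id x).sub_const (t j)).div_const _
    have hω' : HasDerivAt (fun y => (t (j + k + 2) - y) / (t (j + k + 2) - t (j + 1)))
        (-1 / (t (j + k + 2) - t (j + 1))) x := by
      simpa using ((hasDerivAt_const x _).sub (hasDerivAt_id x)).div_const _
    have h := (hω.mul (ih j)).add (hω'.mul (ih (j + 1)))
    refine (h.congr_of_eventuallyEq (.of_forall (Bspl_succ_succ k j))).congr_deriv ?_
    rw [Mspl_succ, Mspl_succ, show j + 1 + k + 1 = j + k + 2 by ring,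
      show j + 1 + 1 = j + 2 by ring]
    linear_combination (Bspl_div_sub_div_eq ht k j x).symm

theorem hasDerivAt_sum_mul_Bspl (ht : StrictMono t) {m : ℤ} {x : ℝ}
    (hx : x ∈ Set.Ioo (t m) (t (m + 1))) (k : ℕ) (α : ℤ → ℝ) {a b : ℤ} (ha : a + k ≤ m)
    (hb : m ≤ b) :
    HasDerivAt (fun y => ∑ j ∈ Icc a b, α j * Bspl t (k + 1) j y)
      (∑ j ∈ Icc (a + 1) b, (α j - α (j - 1)) * Mspl t k j x) x := by
  have hM : ∀ j, x ∉ Set.Ico (t j) (t (j + k)) → Mspl t k j x = 0 := fun j hj => by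
    rw [Mspl, Bspl_eq_zero_of_notMem ht k hj, mul_zero, zero_div]
  refine (HasDerivAt.fun_sum fun j _ => (hasDerivAt_Bspl ht hx k j).const_mul (α j)).congr_deriv ?_
  rw [sum_Icc_by_parts α (fun j => Mspl t k j x) (by omega), hM a, hM (b + 1)]
  · simp
  · exact fun h => by linarith [h.1, hx.2, ht.monotone (show m + 1 ≤ b + 1 by omega)]
  · exact fun h => by linarith [h.2, hx.1, ht.monotone ha]

theorem sum_mul_Mspl_mem_Icc (ht : StrictMono t) {m : ℤ} {x : ℝ}
    (hx : x ∈ Set.Ico (t m) (t (m + 1))) (k : ℕ) (α : ℤ → ℝ) {a b : ℤ} (ha : a + k + 1 ≤ m)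
    (hb : m ≤ b) {lo hi : ℝ}
    (hc : ∀ j ∈ Icc (a + 1) b,
      (k + 1) * ((α j - α (j - 1)) / (t (j + k + 1) - t j)) ∈ Set.Icc lo hi) :
    ∑ j ∈ Icc (a + 1) b, (α j - α (j - 1)) * Mspl t (k + 1) j x ∈ Set.Icc lo hi := by
  convert (convex_Icc lo hi).sum_mem (fun j _ => Bspl_nonneg ht (k + 1) j x)
    (sum_Bspl_eq_one ht hx k (by omega) hb) hc using 2 with j
  rw [Mspl_succ, smul_eq_mul]
  ring

end Bspline

theorem monotoneOn_Icc_of_forall_Icc_succ {g : ℝ → ℝ} {t : ℤ → ℝ} (ht : Monotone t) {r s : ℤ}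
    (hrs : r ≤ s) (hg : ∀ m, r ≤ m → m < s → MonotoneOn g (Set.Icc (t m) (t (m + 1)))) :
    MonotoneOn g (Set.Icc (t r) (t s)) := by
  induction s, hrs using Int.leInduction with
  | base => simp
  | succ s hrs ih =>
    rw [← Set.Icc_union_Icc_eq_Icc (ht hrs) (ht (by omega))]
    exact (ih fun m hrm hms => hg m hrm (by omega)).union_right (hg s hrs (by omega))
      (isGreatest_Icc (ht hrs)) (isLeast_Icc (ht (by omega)))

theorem monotoneOn_Icc_of_hasDerivAt_nonneg {g g' : ℝ → ℝ} {t : ℤ → ℝ} (ht : Monotone t)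
    {r s : ℤ} (hrs : r ≤ s) (hg : ContinuousOn g (Set.Icc (t r) (t s)))
    (hg' : ∀ m, r ≤ m → m < s → ∀ y ∈ Set.Ioo (t m) (t (m + 1)), HasDerivAt g (g' y) y)
    (hg'₀ : ∀ m, r ≤ m → m < s → ∀ y ∈ Set.Ioo (t m) (t (m + 1)), 0 ≤ g' y) :
    MonotoneOn g (Set.Icc (t r) (t s)) := by
  refine monotoneOn_Icc_of_forall_Icc_succ ht hrs fun m hrm hms => ?_
  refine monotoneOn_of_hasDerivWithinAt_nonneg (f' := g') (convex_Icc _ _)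
    (hg.mono (Set.Icc_subset_Icc (ht hrm) (ht (by omega)))) (fun y hy => ?_) (fun y hy => ?_)
  all_goals rw [interior_Icc] at hy
  · exact (hg' m hrm hms y hy).hasDerivWithinAt
  · exact hg'₀ m hrm hms y hy

theorem HasDerivAt.nonneg_of_monotoneOn_Icc {g : ℝ → ℝ} {g' a b x : ℝ} (hd : HasDerivAt g g' x)
    (hg : MonotoneOn g (Set.Icc a b)) (hab : a < b) (hx : x ∈ Set.Icc a b) : 0 ≤ g' :=
  hd.hasDerivWithinAt.derivWithin (uniqueDiffOn_Icc hab x hx) ▸ hg.derivWithin_nonneg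

theorem mem_Icc_of_hasDerivAt_sum_mul_Bspl {t : ℤ → ℝ} (ht : StrictMono t) (k : ℕ) (α : ℤ → ℝ)
    {r s : ℤ} (hrs : r < s) {lo hi : ℝ}
    (hc : ∀ j ∈ Icc (r - k) (s - 1),
      (k + 1) * ((α j - α (j - 1)) / (t (j + k + 1) - t j)) ∈ Set.Icc lo hi)
    {x f' : ℝ} (hx : x ∈ Set.Icc (t r) (t s))
    (hf : HasDerivAt (fun y => ∑ j ∈ Icc (r - (k + 1)) (s - 1), α j * Bspl t (k + 2) j y) f' x) :
    f' ∈ Set.Icc lo hi := by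
  set f := fun y => ∑ j ∈ Icc (r - (k + 1)) (s - 1), α j * Bspl t (k + 2) j y
  set F' := fun y => ∑ j ∈ Icc (r - k) (s - 1), (α j - α (j - 1)) * Mspl t (k + 1) j y
  have hwin : r - (k + 1 : ℤ) + 1 = r - k := by ring
  have hcont : ContinuousOn f (Set.Icc (t r) (t s)) := by
    have := continuous_Bspl ht k
    fun_prop
  have hderiv : ∀ m, r ≤ m → m < s → ∀ y ∈ Set.Ioo (t m) (t (m + 1)), HasDerivAt f (F' y) y := by
    intro m hrm hms y hy
    have := hasDerivAt_sum_mul_Bspl ht hy (k + 1) α (a := r - (k + 1)) (by push_cast; omega)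
      (by omega : m ≤ s - 1)
    rwa [hwin] at this
  have hbound : ∀ m, r ≤ m → m < s → ∀ y ∈ Set.Ioo (t m) (t (m + 1)), F' y ∈ Set.Icc lo hi := by
    intro m hrm hms y hy
    have := sum_mul_Mspl_mem_Icc ht (Set.Ioo_subset_Ico_self hy) k α (a := r - (k + 1))
      (by omega) (by omega : m ≤ s - 1) (hwin ▸ hc)
    rwa [hwin] at this
  have hlo : MonotoneOn (fun y => f y - y * lo) (Set.Icc (t r) (t s)) :=
    monotoneOn_Icc_of_hasDerivAt_nonneg ht.monotone hrs.le (by fun_prop)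
      (fun m hrm hms y hy => (hderiv m hrm hms y hy).sub (hasDerivAt_mul_const lo))
      (fun m hrm hms y hy => sub_nonneg.2 (hbound m hrm hms y hy).1)
  have hhi : MonotoneOn (fun y => y * hi - f y) (Set.Icc (t r) (t s)) :=
    monotoneOn_Icc_of_hasDerivAt_nonneg ht.monotone hrs.le (by fun_prop)
      (fun m hrm hms y hy => (hasDerivAt_mul_const hi).sub (hderiv m hrm hms y hy))
      (fun m hrm hms y hy => sub_nonneg.2 (hbound m hrm hms y hy).2)
  exact ⟨sub_nonneg.1 ((hf.sub (hasDerivAt_mul_const lo)).nonneg_of_monotoneOn_Icc hlo (ht hrs) hx),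
    sub_nonneg.1 (((hasDerivAt_mul_const hi).sub hf).nonneg_of_monotoneOn_Icc hhi (ht hrs) hx)⟩

theorem stmt6_general (t : ℤ → ℝ) (ht : StrictMono t) (k : ℕ) (hk : 3 ≤ k) (r s : ℤ)
    (hrs : r + (k : ℤ) ≤ s) (α : ℤ → ℝ) (l u : ℝ)
    (hcond : ∀ j ∈ Finset.Icc (r - (k : ℤ) + 2) (s - 1),
      l / ((k : ℝ) - 1) < (α j - α (j - 1)) / (t (j + (k : ℤ) - 1) - t j) ∧
      (α j - α (j - 1)) / (t (j + (k : ℤ) - 1) - t j) < u / ((k : ℝ) - 1)) :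
    ∀ x ∈ Set.Icc (t r) (t s),
      DifferentiableAt ℝ
        (fun y => ∑ j ∈ Finset.Icc (r - (k : ℤ) + 1) (s - 1), α j * Bspl t k j y) x →
      l < deriv (fun y => ∑ j ∈ Finset.Icc (r - (k : ℤ) + 1) (s - 1), α j * Bspl t k j y) x ∧
      deriv (fun y => ∑ j ∈ Finset.Icc (r - (k : ℤ) + 1) (s - 1), α j * Bspl t k j y) x < u := by
  intro x hx hdiff
  obtain ⟨K, rfl⟩ : ∃ K, k = K + 2 := ⟨k - 2, by omega⟩
  have hwin : r - ((K + 2 : ℕ) : ℤ) + 1 = r - (K + 1) := by push_cast; ring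
  simp only [hwin] at hdiff ⊢
  set c : ℤ → ℝ := fun j => (K + 1) * ((α j - α (j - 1)) / (t (j + K + 1) - t j))
  have hc : ∀ j ∈ Icc (r - K) (s - 1), l < c j ∧ c j < u := by
    intro j hj
    have := hcond j (by rw [mem_Icc] at hj ⊢; push_cast; omega)
    push_cast at this
    rwa [show (K : ℝ) + 2 - 1 = K + 1 by ring, show j + (K + 2) - 1 = j + K + 1 by ring,
      div_lt_iff₀' (by positivity), lt_div_iff₀' (by positivity)] at this
  have hne : (Icc (r - K) (s - 1)).Nonempty := nonempty_Icc.2 (by omega)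
  have hlo : l < (Icc (r - K) (s - 1)).inf' hne c := (lt_inf'_iff hne).2 fun j hj => (hc j hj).1
  have hhi : (Icc (r - K) (s - 1)).sup' hne c < u := (sup'_lt_iff hne).2 fun j hj => (hc j hj).2
  have hderiv := mem_Icc_of_hasDerivAt_sum_mul_Bspl ht K α (by omega)
    (lo := (Icc (r - K) (s - 1)).inf' hne c) (hi := (Icc (r - K) (s - 1)).sup' hne c)
    (fun j hj => ⟨inf'_le c hj, le_sup' c hj⟩) hx hdiff.hasDerivAt
  exact ⟨hlo.trans_le hderiv.1, hderiv.2.trans_lt hhi⟩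

/-- Sufficient condition for bi-Lipschitz non-uniform B-spline transformations:
bounded scaled coefficient differences give `l < f' < u` on `[t r, t s]`. -/
theorem stmt6 (t : ℤ → ℝ) (ht : StrictMono t) (k : ℕ) (hk : 3 ≤ k) (r s : ℤ)
    (hrs : r + (k : ℤ) ≤ s) (α : ℤ → ℝ) (l u : ℝ) (hl : 0 < l) (hl1 : l < 1) (hu : 1 < u)
    (hcond : ∀ j ∈ Finset.Icc (r - (k : ℤ) + 2) (s - 1),
      l / ((k : ℝ) - 1) < (α j - α (j - 1)) / (t (j + (k : ℤ) - 1) - t j) ∧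
      (α j - α (j - 1)) / (t (j + (k : ℤ) - 1) - t j) < u / ((k : ℝ) - 1)) :
    ∀ x ∈ Set.Icc (t r) (t s),
      DifferentiableAt ℝ
        (fun y => ∑ j ∈ Finset.Icc (r - (k : ℤ) + 1) (s - 1), α j * Bspl t k j y) x →
      l < deriv (fun y => ∑ j ∈ Finset.Icc (r - (k : ℤ) + 1) (s - 1), α j * Bspl t k j y) x ∧
      deriv (fun y => ∑ j ∈ Finset.Icc (r - (k : ℤ) + 1) (s - 1), α j * Bspl t k j y) x < u :=
  stmt6_general t ht k hk r s hrs α l u hcond
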